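/- Radial weighted Hardy–Poincaré inequality (mode k = 2): For every C¹ function v : (0,1) → ℝ such that ∫₀¹ [ (1−r²) v′(r)² + (2N/r²) v(r)² ] (1−r²)^α r^{N−1} dr < ∞, one has ∫₀¹ [ (1−r²) v′(r)² + (2N/r²) v(r)² ] (1−r²)^α r^{N−1} dr ≥ (2(3p+1)/(p−1)) ∫₀¹ v(r)² (1−r²)^α r^{N−1} dr. -/

import Mathlib

/-!
With the weight `w = (1 - r²)^α r^(N-1)` and `G = 2 (1 - r²)^(α+1) r^(N-2) v²`, a direct
computation gives
`G' = ((1 - r²) v'² + 2N v²/r²) w - (4α + 2N + 4) v² w - (1 - r²) (v' - 2v/r)² w`,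
and `4α + 2N + 4 = 2(3p+1)/(p-1)`. So the integrand of the difference of the two sides
dominates `G'`, and its integral over `(a, b)` is at least `G b - G a ≥ -G a`.
Finally `G a ≤ a · (2N/a²) v(a)² w(a)`, and as `(2N/r²) v² w` is integrable near `0`,
this is arbitrarily small for suitable `a` arbitrarily close to `0`.
-/

open MeasureTheory

noncomputable section

/-- The exponent `α = 2/(p−1) − (N−1)/2`. -/
def alphaExp (N : ℕ) (p : ℝ) : ℝ := 2 / (p - 1) - ((N : ℝ) - 1) / 2

open Set Filter Topology

theorem MeasureTheory.IntegrableOn.of_nonneg_of_le {X : Type*} [MeasurableSpace X] {μ : Measure X}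
    {f g : X → ℝ} {s : Set X} (hs : MeasurableSet s) (hg : IntegrableOn g s μ)
    (hf : AEStronglyMeasurable f (μ.restrict s))
    (hfg : ∀ x ∈ s, f x ∈ Icc 0 (g x)) : IntegrableOn f s μ :=
  hg.mono' hf <| (ae_restrict_iff' hs).2 <| ae_of_all _ fun x hx => by
    rw [Real.norm_eq_abs, abs_of_nonneg (hfg x hx).1]
    exact (hfg x hx).2

theorem frequently_mul_lt_of_integrableOn {h : ℝ → ℝ} {t ε : ℝ} (ht : 0 < t)
    (hh : IntegrableOn h (Ioo 0 t)) (hε : 0 < ε) : ∃ᶠ x in 𝓝[>] 0, x * h x < ε := by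
  intro hev
  simp only [not_lt] at hev
  obtain ⟨δ, hδ, hsub⟩ := (nhdsGT_basis 0).mem_iff.1 (hev.and (Ioo_mem_nhdsGT ht))
  have hinv : IntegrableOn (fun x : ℝ => x⁻¹) (Ioo 0 δ) := by
    refine ((hh.mono_set fun x hx => (hsub hx).2).const_mul ε⁻¹).mono'
      measurable_inv.aestronglyMeasurable ((ae_restrict_iff' measurableSet_Ioo).2 <|
        ae_of_all _ fun x hx => ?_)
    have hx0 := hx.1
    rw [Real.norm_eq_abs, abs_of_pos (inv_pos.2 hx0), le_inv_mul_iff₀ hε, ← div_eq_mul_inv,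
      div_le_iff₀ hx0, mul_comm]
    exact (hsub hx).1
  have : IntervalIntegrable (fun x : ℝ => x⁻¹) volume 0 δ :=
    (intervalIntegrable_iff_integrableOn_Ioo_of_le hδ.le).2 hinv
  simp [intervalIntegrable_inv_iff, hδ.ne, hδ.le] at this

theorem integral_Ioo_nonneg_of_hasDerivAt_le {F G G' : ℝ → ℝ} {a b : ℝ} (hab : a < b)
    (hF : IntegrableOn F (Ioo a b)) (hG : ∀ x ∈ Ioo a b, HasDerivAt G (G' x) x)
    (hG'F : ∀ x ∈ Ioo a b, G' x ≤ F x) (hG_nonneg : ∀ x ∈ Ioo a b, 0 ≤ G x)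
    (hG_small : ∀ ε > 0, ∃ᶠ x in 𝓝[>] a, G x < ε) :
    0 ≤ ∫ x in Ioo a b, F x := by
  have hFab : IntervalIntegrable F volume a b :=
    (intervalIntegrable_iff_integrableOn_Ioo_of_le hab.le).2 hF
  have hFI : IntegrableOn F (Icc a b) := (integrableOn_Icc_iff_integrableOn_Ioo).2 hF
  set g : ℝ → ℝ := fun y => ∫ x in a..y, F x with hg_def
  have hg : ContinuousOn g (Icc a b) := by
    simpa only [uIcc_of_le hab.le] using
      intervalIntegral.continuousOn_primitive_interval' hFab left_mem_uIcc
  have hinc : ∀ x ∈ Ioo a b, ∀ y ∈ Ioo a b, x ≤ y → G y - G x ≤ g y - g x := by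
    intro x hx y hy hxy
    have hsub : Icc x y ⊆ Ioo a b := Icc_subset_Ioo hx.1 hy.2
    have hFa : ∀ z ∈ Ioo a b, IntervalIntegrable F volume a z := fun z hz =>
      hFab.mono_set (uIcc_subset_uIcc_left (Icc_subset_uIcc (Ioo_subset_Icc_self hz)))
    rw [hg_def, intervalIntegral.integral_interval_sub_left (hFa y hy) (hFa x hx)]
    exact intervalIntegral.sub_le_integral_of_hasDeriv_right_of_le hxy
      (fun z hz => (hG z (hsub hz)).continuousAt.continuousWithinAt)
      (fun z hz => (hG z (hsub (Ioo_subset_Icc_self hz))).hasDerivWithinAt)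
      (hFI.mono_set (hsub.trans Ioo_subset_Icc_self))
      (fun z hz => hG'F z (hsub (Ioo_subset_Icc_self hz)))
  have hg_a : Tendsto g (𝓝[>] a) (𝓝 0) := by
    have := (hg a (left_mem_Icc.2 hab.le)).mono Ioo_subset_Icc_self
    rwa [ContinuousWithinAt, nhdsWithin_Ioo_eq_nhdsGT hab,
      show g a = 0 from intervalIntegral.integral_same] at this
  have hg_nonneg : ∀ y ∈ Ioo a b, 0 ≤ g y := by
    intro y hy
    refine le_of_forall_pos_lt_add fun ε hε => ?_
    obtain ⟨x, hGx, hgx, hx⟩ := ((hG_small (ε / 2) (half_pos hε)).and_eventually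
      ((hg_a.eventually (lt_mem_nhds (neg_lt_zero.2 (half_pos hε)))).and
        (Ioo_mem_nhdsGT hy.1))).exists
    have := hinc x ⟨hx.1, hx.2.trans hy.2⟩ y hy hx.2.le
    linarith [hG_nonneg y hy]
  have hg_b : Tendsto g (𝓝[<] b) (𝓝 (g b)) := by
    have := (hg b (right_mem_Icc.2 hab.le)).mono Ioo_subset_Icc_self
    rwa [ContinuousWithinAt, nhdsWithin_Ioo_eq_nhdsLT hab] at this
  rw [integral_Ioc_eq_integral_Ioo.symm, ← intervalIntegral.integral_of_le hab.le]
  exact ge_of_tendsto hg_b (eventually_of_mem (Ioo_mem_nhdsLT hab) hg_nonneg)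

section Pointwise

variable {α n r : ℝ}

theorem one_sub_sq_pos_of_mem_Ioo (hr : r ∈ Ioo 0 1) : 0 < 1 - r ^ 2 := by
  nlinarith [hr.1, hr.2]

theorem hasDerivAt_potential {v : ℝ → ℝ} {d : ℝ} (hr : r ∈ Ioo 0 1)
    (hv : HasDerivAt v d r) :
    HasDerivAt (fun s => 2 * (1 - s ^ 2) ^ (α + 1) * s ^ (n - 2) * v s ^ 2)
      (((1 - r ^ 2) * d ^ 2 + 2 * n / r ^ 2 * v r ^ 2) * (1 - r ^ 2) ^ α * r ^ (n - 1)
        - (4 * α + 2 * n + 4) * (v r ^ 2 * (1 - r ^ 2) ^ α * r ^ (n - 1))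
        - (1 - r ^ 2) * (d - 2 * v r / r) ^ 2 * ((1 - r ^ 2) ^ α * r ^ (n - 1))) r := by
  have h1 := one_sub_sq_pos_of_mem_Ioo hr
  have hr0 := hr.1
  have hA : HasDerivAt (fun s : ℝ => (1 - s ^ 2) ^ (α + 1))
      (-(2 * r) * (α + 1) * (1 - r ^ 2) ^ α) r := by
    simpa using ((hasDerivAt_pow 2 r).const_sub 1).rpow_const (p := α + 1) (Or.inl h1.ne')
  have hB : HasDerivAt (fun s : ℝ => s ^ (n - 2)) ((n - 2) * r ^ (n - 3)) r := by
    simpa [show n - 2 - 1 = n - 3 by ring] using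
      Real.hasDerivAt_rpow_const (p := n - 2) (Or.inl hr0.ne')
  refine (((hA.const_mul 2).mul hB).mul (hv.pow 2)).congr_deriv ?_
  simp only [Pi.mul_apply, Pi.pow_apply]
  rw [Real.rpow_add_one h1.ne', show n - 2 = n - 3 + 1 by ring, show n - 1 = n - 3 + 1 + 1 by ring]
  simp only [Real.rpow_add_one hr0.ne']
  field_simp
  ring

theorem sq_mul_weight_le (hn : 1 ≤ 2 * n) (hr : r ∈ Ioo 0 1) (x d : ℝ) :
    x ^ 2 * (1 - r ^ 2) ^ α * r ^ (n - 1)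
      ≤ ((1 - r ^ 2) * d ^ 2 + 2 * n / r ^ 2 * x ^ 2) * (1 - r ^ 2) ^ α * r ^ (n - 1) := by
  have h1 := one_sub_sq_pos_of_mem_Ioo hr
  have hr0 := hr.1
  have hn' : 1 ≤ 2 * n / r ^ 2 := by rw [le_div_iff₀ (by positivity)]; nlinarith
  rw [mul_assoc, mul_assoc _ ((1 - r ^ 2) ^ α)]
  gcongr
  nlinarith [mul_le_mul_of_nonneg_right hn' (sq_nonneg x), mul_nonneg h1.le (sq_nonneg d)]

theorem hardy_term_mem_Icc (hn : 0 ≤ n) (hr : r ∈ Ioo 0 1) (x d : ℝ) :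
    2 * n / r ^ 2 * x ^ 2 * (1 - r ^ 2) ^ α * r ^ (n - 1) ∈ Icc 0
      (((1 - r ^ 2) * d ^ 2 + 2 * n / r ^ 2 * x ^ 2) * (1 - r ^ 2) ^ α * r ^ (n - 1)) := by
  have h1 := one_sub_sq_pos_of_mem_Ioo hr
  have hr0 := hr.1
  refine ⟨by positivity, ?_⟩
  gcongr
  nlinarith [mul_nonneg h1.le (sq_nonneg d)]

theorem potential_le (hn : 1 ≤ n) (hr : r ∈ Ioo 0 1) (x : ℝ) :
    2 * (1 - r ^ 2) ^ (α + 1) * r ^ (n - 2) * x ^ 2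
      ≤ r * (2 * n / r ^ 2 * x ^ 2 * (1 - r ^ 2) ^ α * r ^ (n - 1)) := by
  have h1 := one_sub_sq_pos_of_mem_Ioo hr
  have hr0 := hr.1
  rw [Real.rpow_add_one h1.ne', show n - 1 = n - 2 + 1 by ring, Real.rpow_add_one hr0.ne']
  have : 0 ≤ (1 - r ^ 2) ^ α * r ^ (n - 2) * x ^ 2 := by positivity
  field_simp
  nlinarith

end Pointwise

theorem weighted_hardy_poincare {α n : ℝ} (hn : 1 ≤ n) {v : ℝ → ℝ}
    (hv : ContDiffOn ℝ 1 v (Ioo 0 1))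
    (hint : IntegrableOn (fun r => ((1 - r ^ 2) * deriv v r ^ 2 + 2 * n / r ^ 2 * v r ^ 2) *
      (1 - r ^ 2) ^ α * r ^ (n - 1)) (Ioo 0 1)) :
    (4 * α + 2 * n + 4) * ∫ r in Ioo 0 1, v r ^ 2 * (1 - r ^ 2) ^ α * r ^ (n - 1)
      ≤ ∫ r in Ioo 0 1, ((1 - r ^ 2) * deriv v r ^ 2 + 2 * n / r ^ 2 * v r ^ 2) *
          (1 - r ^ 2) ^ α * r ^ (n - 1) := by
  have hvd : ∀ r ∈ Ioo (0 : ℝ) 1, HasDerivAt v (deriv v r) r := fun r hr =>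
    ((hv.differentiableOn one_ne_zero).differentiableAt (isOpen_Ioo.mem_nhds hr)).hasDerivAt
  have hv_meas : AEMeasurable v (volume.restrict (Ioo 0 1)) :=
    hv.continuousOn.aemeasurable measurableSet_Ioo
  have hr_pos : ∀ r ∈ Ioo (0 : ℝ) 1, 0 < 1 - r ^ 2 ∧ 0 < r := fun r hr =>
    ⟨one_sub_sq_pos_of_mem_Ioo hr, hr.1⟩
  have hQ : IntegrableOn (fun r => v r ^ 2 * (1 - r ^ 2) ^ α * r ^ (n - 1)) (Ioo 0 1) :=
    hint.of_nonneg_of_le measurableSet_Ioo (by fun_prop) fun r hr =>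
      ⟨by obtain ⟨_, _⟩ := hr_pos r hr; positivity, sq_mul_weight_le (by linarith) hr _ _⟩
  have hH : IntegrableOn (fun r => 2 * n / r ^ 2 * v r ^ 2 * (1 - r ^ 2) ^ α * r ^ (n - 1))
      (Ioo 0 1) :=
    hint.of_nonneg_of_le measurableSet_Ioo (by fun_prop) fun r hr =>
      hardy_term_mem_Icc (by linarith) hr _ _
  rw [← sub_nonneg, ← integral_const_mul, ← integral_sub hint (hQ.const_mul _)]
  refine integral_Ioo_nonneg_of_hasDerivAt_le zero_lt_one (hint.sub (hQ.const_mul _))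
    (fun r hr => hasDerivAt_potential hr (hvd r hr))
    (fun r hr => sub_le_self _ (by obtain ⟨_, _⟩ := hr_pos r hr; positivity))
    (fun r hr => by obtain ⟨_, _⟩ := hr_pos r hr; positivity) fun ε hε => ?_
  exact (frequently_mul_lt_of_integrableOn one_pos hH hε).mp <|
    eventually_of_mem (Ioo_mem_nhdsGT one_pos) fun r hr h => (potential_le hn hr _).trans_lt h

theorem stmt11_general (N : ℕ) (p : ℝ) (hN : 1 ≤ N) (hp1 : 1 < p)
    (v : ℝ → ℝ) (hv : ContDiffOn ℝ 1 v (Set.Ioo (0 : ℝ) 1))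
    (hint : IntegrableOn
      (fun r => ((1 - r ^ 2) * deriv v r ^ 2 + 2 * (N : ℝ) / r ^ 2 * v r ^ 2) *
        (1 - r ^ 2) ^ alphaExp N p * r ^ ((N : ℝ) - 1)) (Set.Ioo (0 : ℝ) 1)) :
    2 * (3 * p + 1) / (p - 1) *
        ∫ r in Set.Ioo (0 : ℝ) 1,
          v r ^ 2 * (1 - r ^ 2) ^ alphaExp N p * r ^ ((N : ℝ) - 1)
      ≤ ∫ r in Set.Ioo (0 : ℝ) 1,
          ((1 - r ^ 2) * deriv v r ^ 2 + 2 * (N : ℝ) / r ^ 2 * v r ^ 2) *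
            (1 - r ^ 2) ^ alphaExp N p * r ^ ((N : ℝ) - 1) := by
  have hC : 2 * (3 * p + 1) / (p - 1) = 4 * alphaExp N p + 2 * N + 4 := by
    rw [alphaExp]
    field_simp [(sub_pos.2 hp1).ne']
    ring
  rw [hC]
  exact weighted_hardy_poincare (by exact_mod_cast hN) hv hint

/-- Radial weighted Hardy–Poincaré inequality (mode k = 2). -/
theorem stmt11 (N : ℕ) (p : ℝ) (hN : 1 ≤ N) (hp1 : 1 < p)
    (hpc : 2 ≤ N → p < 1 + 4 / ((N : ℝ) - 1))
    (v : ℝ → ℝ) (hv : ContDiffOn ℝ 1 v (Set.Ioo (0 : ℝ) 1))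
    (hint : IntegrableOn
      (fun r => ((1 - r ^ 2) * deriv v r ^ 2 + 2 * (N : ℝ) / r ^ 2 * v r ^ 2) *
        (1 - r ^ 2) ^ alphaExp N p * r ^ ((N : ℝ) - 1)) (Set.Ioo (0 : ℝ) 1)) :
    2 * (3 * p + 1) / (p - 1) *
        ∫ r in Set.Ioo (0 : ℝ) 1,
          v r ^ 2 * (1 - r ^ 2) ^ alphaExp N p * r ^ ((N : ℝ) - 1)
      ≤ ∫ r in Set.Ioo (0 : ℝ) 1,
          ((1 - r ^ 2) * deriv v r ^ 2 + 2 * (N : ℝ) / r ^ 2 * v r ^ 2) *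
            (1 - r ^ 2) ^ alphaExp N p * r ^ ((N : ℝ) - 1) :=
  stmt11_general N p hN hp1 v hv hint
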